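/- Let C be a triangulated category endowed with a weight structure w and an adjacent t-structure t, and m ≤ n. Then a morphism g of C kills weights m,...,n if and only if g factors through an object of C_{w∉[m,n]} (an object without weights m,...,n). -/

import Mathlib

open CategoryTheory CategoryTheory.Limits CategoryTheory.Pretriangulated Opposite

universe v u

variable (C : Type u) [Category.{v} C] [Preadditive C] [HasZeroObject C]
  [HasShift C ℤ] [∀ n : ℤ, (shiftFunctor C n).Additive] [Pretriangulated C]

/-- A weight structure on the triangulated category `C`. -/
structure WeightStructure where
  /-- the class `C_{w ≤ n}` -/
  le : ℤ → Set C
  /-- the class `C_{w ≥ n}` -/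
  ge : ℤ → Set C
  le_iso_closed : ∀ (n : ℤ) (X Y : C), (X ≅ Y) → X ∈ le n → Y ∈ le n
  ge_iso_closed : ∀ (n : ℤ) (X Y : C), (X ≅ Y) → X ∈ ge n → Y ∈ ge n
  le_retract : ∀ (n : ℤ) (X Y : C) (a : X ⟶ Y) (b : Y ⟶ X),
    a ≫ b = 𝟙 X → Y ∈ le n → X ∈ le n
  ge_retract : ∀ (n : ℤ) (X Y : C) (a : X ⟶ Y) (b : Y ⟶ X),
    a ≫ b = 𝟙 X → Y ∈ ge n → X ∈ ge n
  le_shift : ∀ (n k : ℤ) (X : C), X ∈ le n → X⟦k⟧ ∈ le (n + k)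
  ge_shift : ∀ (n k : ℤ) (X : C), X ∈ ge n → X⟦k⟧ ∈ ge (n + k)
  le_mono : ∀ n : ℤ, le n ⊆ le (n + 1)
  ge_anti : ∀ n : ℤ, ge (n + 1) ⊆ ge n
  orth : ∀ (n : ℤ) (X Y : C), X ∈ le n → Y ∈ ge (n + 1) → ∀ f : X ⟶ Y, f = 0
  decomp : ∀ (X : C) (k : ℤ), ∃ (A B : C) (x : A ⟶ X) (y : X ⟶ B) (δ : B ⟶ A⟦(1 : ℤ)⟧),
    (Triangle.mk x y δ ∈ distTriang C) ∧ A ∈ le k ∧ B ∈ ge (k + 1)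

variable {C}

/-- `(A, B, x, y)` is a `k`-weight decomposition of `X`. -/
def WeightStructure.IsWeightDecomp (w : WeightStructure C) (k : ℤ) {X : C} (A B : C)
    (x : A ⟶ X) (y : X ⟶ B) : Prop :=
  (∃ δ : B ⟶ A⟦(1 : ℤ)⟧, Triangle.mk x y δ ∈ distTriang C) ∧ A ∈ w.le k ∧ B ∈ w.ge (k + 1)

/-- `g : M ⟶ N` kills weights `m, …, n`. -/
def WeightStructure.KillsWeights (w : WeightStructure C) (m n : ℤ) {M N : C}
    (g : M ⟶ N) : Prop :=
  ∃ (A A' B B' : C) (x : A ⟶ M) (x' : M ⟶ A') (y' : B ⟶ N) (y : N ⟶ B'),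
    w.IsWeightDecomp n A A' x x' ∧ w.IsWeightDecomp (m - 1) B B' y' y ∧
      x ≫ g ≫ y = 0

/-- The class of objects of `C` without weights `m, …, n`. -/
def WeightStructure.without (w : WeightStructure C) (m n : ℤ) : Set C :=
  {M : C | w.KillsWeights m n (𝟙 M)}


/-- A `t`-structure on the triangulated category `C` (cohomological conventions,
with `le n = C_{t ≤ n}` and `ge n = C_{t ≥ n}`). -/
structure TStructure (C : Type u) [Category.{v} C] [Preadditive C] [HasZeroObject C]
    [HasShift C ℤ] [∀ n : ℤ, (shiftFunctor C n).Additive] [Pretriangulated C] where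
  le : ℤ → Set C
  ge : ℤ → Set C
  le_iso_closed : ∀ (n : ℤ) (X Y : C), (X ≅ Y) → X ∈ le n → Y ∈ le n
  ge_iso_closed : ∀ (n : ℤ) (X Y : C), (X ≅ Y) → X ∈ ge n → Y ∈ ge n
  le_shift : ∀ (n k : ℤ) (X : C), X ∈ le n → X⟦k⟧ ∈ le (n + k)
  ge_shift : ∀ (n k : ℤ) (X : C), X ∈ ge n → X⟦k⟧ ∈ ge (n + k)
  le_mono : ∀ n : ℤ, le n ⊆ le (n + 1)
  ge_anti : ∀ n : ℤ, ge (n + 1) ⊆ ge n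
  orth : ∀ (n : ℤ) (X Y : C), X ∈ ge (n + 1) → Y ∈ le n → ∀ f : X ⟶ Y, f = 0
  decomp : ∀ (X : C) (n : ℤ), ∃ (A B : C) (x : A ⟶ X) (y : X ⟶ B) (δ : B ⟶ A⟦(1 : ℤ)⟧),
    (Triangle.mk x y δ ∈ distTriang C) ∧ A ∈ ge (n + 1) ∧ B ∈ le n

/-!
Given weight decompositions `A → M → A'` at `n` and `B → N → B'` at `m - 1` with `x ≫ g ≫ y = 0`,
the composite `g ≫ y` factors through `A' ∈ C_{w ≥ n+1}`. By adjacency `A'` lies in `C_{t ≥ n+1}`,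
so this factorization passes through the `t`-truncation `D → B'` with `D ∈ C_{t ≥ n+1} = C_{w ≥ n+1}`.
Hence `g` factors through the homotopy pullback `Z` of `N → B' ← D`, which sits in a triangle
`B → Z → D` with `B ∈ C_{w ≤ m-1}` and `D ∈ C_{w ≥ n+1}`, so `Z` has no weights `m, …, n`.
Conversely, killing weights is stable under composition on either side, because morphisms from
`C_{w ≤ n}` lift through any weight decomposition (and dually).
-/

lemma mem_iff_shift_neg_mem_zero {D : Type*} [Category D] [HasShift D ℤ] {S : ℤ → Set D}
    (iso_closed : ∀ (n : ℤ) (X Y : D), (X ≅ Y) → X ∈ S n → Y ∈ S n)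
    (shift : ∀ (n k : ℤ) (X : D), X ∈ S n → X⟦k⟧ ∈ S (n + k)) (k : ℤ) (X : D) :
    X ∈ S k ↔ X⟦-k⟧ ∈ S 0 := by
  constructor
  · intro hX
    simpa using shift k (-k) X hX
  · intro hX
    exact iso_closed k _ _ (shiftNegShift X k) (by simpa using shift 0 k _ hX)

namespace WeightStructure

variable (w : WeightStructure C)

lemma ge_eq_of_adjacent (t : TStructure C) (adj : w.ge 0 = t.ge 0) (k : ℤ) :
    w.ge k = t.ge k := by
  ext X
  rw [mem_iff_shift_neg_mem_zero w.ge_iso_closed w.ge_shift, adj,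
    ← mem_iff_shift_neg_mem_zero t.ge_iso_closed t.ge_shift]

lemma ge_antitone : Antitone w.ge :=
  antitone_int_of_succ_le w.ge_anti

lemma exists_isWeightDecomp (X : C) (k : ℤ) :
    ∃ (A B : C) (x : A ⟶ X) (y : X ⟶ B), w.IsWeightDecomp k A B x y := by
  obtain ⟨A, B, x, y, δ, hT, hA, hB⟩ := w.decomp X k
  exact ⟨A, B, x, y, ⟨δ, hT⟩, hA, hB⟩

variable {w}

lemma IsWeightDecomp.exists_lift {k : ℤ} {X A B P : C} {x : A ⟶ X} {y : X ⟶ B}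
    (h : w.IsWeightDecomp k A B x y) (hP : P ∈ w.le k) (f : P ⟶ X) :
    ∃ u : P ⟶ A, f = u ≫ x := by
  obtain ⟨⟨δ, hT⟩, -, hB⟩ := h
  exact Triangle.coyoneda_exact₂ _ hT f (w.orth k P B hP hB _)

lemma IsWeightDecomp.exists_desc {k : ℤ} {X A B Q : C} {x : A ⟶ X} {y : X ⟶ B}
    (h : w.IsWeightDecomp k A B x y) (hQ : Q ∈ w.ge (k + 1)) (f : X ⟶ Q) :
    ∃ v : B ⟶ Q, f = y ≫ v := by
  obtain ⟨⟨δ, hT⟩, hA, -⟩ := h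
  exact Triangle.yoneda_exact₂ _ hT f (w.orth k A Q hA hQ _)

lemma KillsWeights.comp_left {m n : ℤ} {M' M N : C} {f : M ⟶ N} (hf : w.KillsWeights m n f)
    (a : M' ⟶ M) : w.KillsWeights m n (a ≫ f) := by
  obtain ⟨A, A', B, B', x, x', y', y, hM, hN, hf⟩ := hf
  obtain ⟨A₁, A₁', x₁, x₁', hM'⟩ := w.exists_isWeightDecomp M' n
  obtain ⟨u, hu⟩ := hM.exists_lift hM'.2.1 (x₁ ≫ a)
  refine ⟨A₁, A₁', B, B', x₁, x₁', y', y, hM', hN, ?_⟩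
  rw [← Category.assoc, ← Category.assoc, hu, Category.assoc, Category.assoc, hf, comp_zero]

lemma KillsWeights.comp_right {m n : ℤ} {M N N' : C} {f : M ⟶ N} (hf : w.KillsWeights m n f)
    (b : N ⟶ N') : w.KillsWeights m n (f ≫ b) := by
  obtain ⟨A, A', B, B', x, x', y', y, hM, hN, hf⟩ := hf
  obtain ⟨B₁, B₁', y₁', y₁, hN'⟩ := w.exists_isWeightDecomp N' (m - 1)
  obtain ⟨v, hv⟩ := hN.exists_desc hN'.2.2 (b ≫ y₁)
  refine ⟨A, A', B₁, B₁', x, x', y₁', y₁, hM, hN', ?_⟩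
  simp only [Category.assoc, hv]
  simp only [← Category.assoc, hf, zero_comp]

lemma mem_without_of_distTriang {m n : ℤ} (hmn : m ≤ n + 1) {B Z D : C} (i : B ⟶ Z) (p : Z ⟶ D)
    (φ : D ⟶ B⟦(1 : ℤ)⟧) (hT : Triangle.mk i p φ ∈ distTriang C)
    (hB : B ∈ w.le (m - 1)) (hD : D ∈ w.ge (n + 1)) : Z ∈ w.without m n := by
  obtain ⟨A, A', x, x', hZ⟩ := w.exists_isWeightDecomp Z n
  refine ⟨A, A', B, D, x, x', i, p, hZ, ⟨⟨φ, hT⟩, hB, w.ge_antitone (by omega) hD⟩, ?_⟩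
  rw [Category.id_comp]
  exact w.orth n A D hZ.2.1 hD _

end WeightStructure

/-- The triangle `B → Z → D → B⟦1⟧` with connecting map `d ≫ ε` exhibits `Z` as a homotopy pullback
of `y` and `d`. -/
lemma exists_factor_through_homotopyPullback {B N B' D Z M : C} {y' : B ⟶ N} {y : N ⟶ B'}
    {ε : B' ⟶ B⟦(1 : ℤ)⟧} (hN : Triangle.mk y' y ε ∈ distTriang C) {d : D ⟶ B'}
    {i : B ⟶ Z} {p : Z ⟶ D} (hZ : Triangle.mk i p (d ≫ ε) ∈ distTriang C)
    {g : M ⟶ N} {f : M ⟶ D} (h : g ≫ y = f ≫ d) :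
    ∃ (a : M ⟶ Z) (b : Z ⟶ N), a ≫ b = g := by
  obtain ⟨b, hib, hpb⟩ : ∃ b : Z ⟶ N, i ≫ b = 𝟙 B ≫ y' ∧ p ≫ d = b ≫ y :=
    complete_distinguished_triangle_morphism₂ _ _ hZ hN (𝟙 B) d
      (by show (d ≫ ε) ≫ (shiftFunctor C 1).map (𝟙 B) = d ≫ ε; simp)
  have hyε : y ≫ ε = 0 := comp_distTriang_mor_zero₂₃ _ hN
  have hfε : f ≫ d ≫ ε = 0 := by
    rw [← Category.assoc, ← h, Category.assoc, hyε, comp_zero]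
  obtain ⟨a₀, ha₀⟩ : ∃ a₀ : M ⟶ Z, f = a₀ ≫ p := Triangle.coyoneda_exact₃ _ hZ f hfε
  have hdefect : (g - a₀ ≫ b) ≫ y = 0 := by
    rw [Preadditive.sub_comp, Category.assoc, ← hpb, ← Category.assoc, ← ha₀, h, sub_self]
  obtain ⟨u, hu⟩ : ∃ u : M ⟶ B, g - a₀ ≫ b = u ≫ y' :=
    Triangle.coyoneda_exact₂ _ hN _ hdefect
  refine ⟨a₀ + u ≫ i, b, ?_⟩
  rw [Preadditive.add_comp, Category.assoc, hib, Category.id_comp, ← hu, add_sub_cancel]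

lemma WeightStructure.KillsWeights.exists_factor_through_without {w : WeightStructure C}
    (t : TStructure C) (adj : w.ge 0 = t.ge 0) {m n : ℤ} (hmn : m ≤ n + 1) {M N : C}
    {g : M ⟶ N} (hg : w.KillsWeights m n g) :
    ∃ (Z : C) (a : M ⟶ Z) (b : Z ⟶ N), Z ∈ w.without m n ∧ a ≫ b = g := by
  obtain ⟨A, A', B, B', x, x', y', y, ⟨⟨δ, hM⟩, -, hA'⟩, ⟨⟨ε, hN⟩, hB, -⟩, hg⟩ := hg
  obtain ⟨s, hs⟩ : ∃ s : A' ⟶ B', g ≫ y = x' ≫ s := Triangle.yoneda_exact₂ _ hM (g ≫ y) hg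
  obtain ⟨D, E, d, e, η, hB', hD, hE⟩ := t.decomp B' n
  rw [w.ge_eq_of_adjacent t adj] at hA'
  obtain ⟨s', hs'⟩ : ∃ s' : A' ⟶ D, s = s' ≫ d :=
    Triangle.coyoneda_exact₂ _ hB' s (t.orth n A' E hA' hE _)
  obtain ⟨Z, i, p, hZ⟩ := distinguished_cocone_triangle₂ (d ≫ ε)
  obtain ⟨a, b, hab⟩ := exists_factor_through_homotopyPullback hN hZ (f := x' ≫ s')
    (by rw [hs, hs', Category.assoc])
  rw [← w.ge_eq_of_adjacent t adj] at hD
  exact ⟨Z, a, b, w.mem_without_of_distTriang hmn i p _ hZ hB hD, hab⟩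

/-- If `t` is adjacent to `w`, a morphism kills weights `m, …, n` iff it factors
through an object without these weights. -/
theorem stmt11 (w : WeightStructure C) (t : TStructure C)
    (adj : w.ge 0 = t.ge 0) (m n : ℤ) (hmn : m ≤ n) {M N : C} (g : M ⟶ N) :
    w.KillsWeights m n g ↔
      ∃ (Z : C) (a : M ⟶ Z) (b : Z ⟶ N), Z ∈ w.without m n ∧ a ≫ b = g := by
  constructor
  · exact WeightStructure.KillsWeights.exists_factor_through_without t adj (by omega)
  · rintro ⟨Z, a, b, hZ, rfl⟩
    simpa using (hZ.comp_left a).comp_right b
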